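/- arXiv:1605.03661 — 4 statements merged into one kernel-verified Lean document; each statement's English description precedes it below -/
import Mathlib

section
/- With the setup of the previous lemma, for any function h : X × {0,1} → ℝ, write ŷᵢF = h(xᵢ, tᵢ) and ŷᵢCF = h(xᵢ, 1−tᵢ). Then (1/n)·Σᵢ |ŷᵢCF − yᵢCF| ≤ (1/n)·Σᵢ |ŷᵢCF − y_{j(i)}F| + (K₀/n)·Σ_{i : tᵢ=1} d(xᵢ, x_{j(i)}) + (K₁/n)·Σ_{i : tᵢ=0} d(xᵢ, x_{j(i)}). -/
open Finset

/-- averaged nearest-neighbor bound on the counterfactual fitting error. -/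
theorem stmt1
    {X : Type*} [MetricSpace X] (n : ℕ)
    (Y0 Y1 : X → ℝ) (K0 K1 : ℝ)
    (hY0 : ∀ a b : X, |Y0 a - Y0 b| ≤ K0 * dist a b)
    (hY1 : ∀ a b : X, |Y1 a - Y1 b| ≤ K1 * dist a b)
    (x : Fin n → X) (t : Fin n → Bool)
    (yF : Fin n → ℝ) (hyF : ∀ i, yF i = if t i then Y1 (x i) else Y0 (x i))
    (yCF : Fin n → ℝ) (hyCF : ∀ i, yCF i = if t i then Y0 (x i) else Y1 (x i))
    (j : Fin n → Fin n)
    (hj : ∀ i, t (j i) = ! t i)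
    (hjmin : ∀ i k, t k = ! t i → dist (x i) (x (j i)) ≤ dist (x i) (x k))
    (h : X → Bool → ℝ)
    (yhatCF : Fin n → ℝ) (hyhatCF : ∀ i, yhatCF i = h (x i) (! t i)) :
    (1 / (n : ℝ)) * ∑ i, |yhatCF i - yCF i| ≤
      (1 / (n : ℝ)) * ∑ i, |yhatCF i - yF (j i)|
        + (K0 / n) * ∑ i ∈ univ.filter (fun i => t i = true), dist (x i) (x (j i))
        + (K1 / n) * ∑ i ∈ univ.filter (fun i => t i = false), dist (x i) (x (j i)) := by
  have hmid : ∀ i, |yF (j i) - yCF i| ≤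
      (if t i then K0 * dist (x i) (x (j i)) else K1 * dist (x i) (x (j i))) := by
    intro i
    have hji := hj i
    cases hti : t i with
    | true =>
      rw [hti] at hji; simp only [Bool.not_true] at hji
      rw [hyF, hyCF, hji, hti]
      simp only [if_neg Bool.false_ne_true, if_pos rfl, if_true]
      calc |Y0 (x (j i)) - Y0 (x i)| ≤ K0 * dist (x (j i)) (x i) := hY0 _ _
        _ = K0 * dist (x i) (x (j i)) := by rw [dist_comm]
    | false =>
      rw [hti] at hji; simp only [Bool.not_false] at hji
      rw [hyF, hyCF, hji, hti]
      simp only [if_pos rfl, if_neg Bool.false_ne_true]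
      calc |Y1 (x (j i)) - Y1 (x i)| ≤ K1 * dist (x (j i)) (x i) := hY1 _ _
        _ = K1 * dist (x i) (x (j i)) := by rw [dist_comm]
  have key : ∑ i, |yhatCF i - yCF i| ≤ ∑ i, |yhatCF i - yF (j i)|
      + (K0 * ∑ i ∈ univ.filter (fun i => t i = true), dist (x i) (x (j i))
        + K1 * ∑ i ∈ univ.filter (fun i => t i = false), dist (x i) (x (j i))) := by
    have h1 : ∑ i, |yhatCF i - yCF i| ≤
        ∑ i, (|yhatCF i - yF (j i)| + |yF (j i) - yCF i|) := by
      apply Finset.sum_le_sum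
      intro i _
      calc |yhatCF i - yCF i| = |(yhatCF i - yF (j i)) + (yF (j i) - yCF i)| := by ring_nf
        _ ≤ |yhatCF i - yF (j i)| + |yF (j i) - yCF i| := abs_add_le _ _
    rw [Finset.sum_add_distrib] at h1
    refine h1.trans (add_le_add (le_refl _) ?_)
    have h2 : ∑ i, |yF (j i) - yCF i| ≤
        ∑ i, (if t i then K0 * dist (x i) (x (j i)) else K1 * dist (x i) (x (j i))) :=
      Finset.sum_le_sum fun i _ => hmid i
    refine h2.trans (le_of_eq ?_)
    rw [Finset.mul_sum, Finset.mul_sum,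
      ← Finset.sum_filter_add_sum_filter_not univ (fun i => t i = true)
        (fun i => if t i then K0 * dist (x i) (x (j i)) else K1 * dist (x i) (x (j i)))]
    congr 1
    · apply Finset.sum_congr rfl
      intro i hi
      simp only [Finset.mem_filter] at hi
      rw [if_pos hi.2]
    · have hfe : (univ.filter (fun i => ¬ t i = true)) = univ.filter (fun i => t i = false) := by
        ext i; simp
      rw [hfe]
      apply Finset.sum_congr rfl
      intro i hi
      simp only [Finset.mem_filter] at hi
      rw [if_neg (by simp [hi.2])]
  have hn : (0:ℝ) ≤ 1 / n := by positivity
  have := mul_le_mul_of_nonneg_left key hn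
  calc (1 / (n : ℝ)) * ∑ i, |yhatCF i - yCF i| ≤ _ := this
    _ = (1 / (n : ℝ)) * ∑ i, |yhatCF i - yF (j i)|
        + (K0 / n) * ∑ i ∈ univ.filter (fun i => t i = true), dist (x i) (x (j i))
        + (K1 / n) * ∑ i ∈ univ.filter (fun i => t i = false), dist (x i) (x (j i)) := by
      ring
end

section
/- With the notation of the previous statement, if v = (1/n)Σᵢ(2tᵢ−1)xᵢ and p = (1/n)Σᵢ tᵢ, then ‖M_F − M_CF‖₂ = |p − 1/2| + sqrt((p−1/2)² + ‖v‖₂²). In particular, if p = 1/2 (equal numbers of treated and control), then ‖M_F − M_CF‖₂ = ‖v‖₂, the norm of the weighted difference in group means. -/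
open Matrix Finset


lemma aux_bound (a B S c2 V2 : ℝ) (hBa : B + a^2 = 1) (hB0 : 0 ≤ B) (hV0 : 0 ≤ V2)
    (hCS : S^2 ≤ V2 * B) :
    |2*c2*a^2 + 2*a*S| ≤ |c2| + Real.sqrt (c2^2 + V2) := by
  set K := Real.sqrt (c2^2 + V2) with hK
  have hK0 : 0 ≤ K := Real.sqrt_nonneg _
  have hK2 : K^2 = c2^2 + V2 := Real.sq_sqrt (by positivity)
  have hX2 : (2*a*S + c2*(a^2 - B))^2 ≤ K^2 := by
    rw [hK2]
    rcases eq_or_lt_of_le hB0 with h0 | hpos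
    · have hS : S = 0 := by nlinarith [sq_nonneg S]
      have ha2 : a^2 = 1 := by linarith
      rw [hS, ← h0, ha2]; nlinarith [sq_nonneg c2]
    · have hB1 : B = 1 - a^2 := by linarith
      have key : B * (2*a*S + c2*(a^2 - B))^2 ≤ B * (c2^2 + V2) := by
        rw [hB1] at hCS ⊢
        nlinarith [sq_nonneg (2*c2*a*(1-a^2) - S*(a^2-(1-a^2))), hCS]
      exact le_of_mul_le_mul_left key hpos
  have hXK : |2*a*S + c2*(a^2 - B)| ≤ K := by
    rw [← Real.sqrt_sq hK0, ← Real.sqrt_sq_eq_abs]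
    exact Real.sqrt_le_sqrt hX2
  have hQ : 2*c2*a^2 + 2*a*S = c2 + (2*a*S + c2*(a^2 - B)) := by linear_combination c2 * hBa
  rw [hQ]
  calc |c2 + (2*a*S + c2*(a^2-B))| ≤ |c2| + |2*a*S + c2*(a^2-B)| := abs_add_le _ _
    _ ≤ |c2| + K := by linarith

lemma aux_attain (c2 V2 : ℝ) (hV : 0 < V2) :
    ∃ a b : ℝ, a^2 + b^2 = 1 ∧
      |2*c2*a^2 + 2*a*(b*Real.sqrt V2)| = |c2| + Real.sqrt (c2^2 + V2) := by
  set T := Real.sqrt V2 with hT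
  have hT2 : T^2 = V2 := Real.sq_sqrt hV.le
  have hTpos : 0 < T := Real.sqrt_pos.mpr hV
  set K := Real.sqrt (c2^2 + V2) with hK
  have hK2 : K^2 = c2^2 + V2 := Real.sq_sqrt (by positivity)
  have hKpos : 0 < K := Real.sqrt_pos.mpr (by positivity)
  have habsK : |c2| ≤ K := by
    rw [← Real.sqrt_sq_eq_abs]
    exact Real.sqrt_le_sqrt (by linarith)
  set ε : ℝ := if 0 ≤ c2 then 1 else -1 with hε
  have hε2 : ε^2 = 1 := by rw [hε]; split <;> norm_num
  set α := (1 + |c2|/K)/2 with hα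
  set β := (1 - |c2|/K)/2 with hβ
  have hα0 : 0 ≤ α := by positivity
  have hβ0 : 0 ≤ β := by
    have : |c2|/K ≤ 1 := (div_le_one hKpos).mpr habsK
    rw [hβ]; linarith
  refine ⟨Real.sqrt α, ε * Real.sqrt β, ?_, ?_⟩
  · have h1 : (Real.sqrt α)^2 = α := Real.sq_sqrt hα0
    have h2 : (ε * Real.sqrt β)^2 = β := by
      rw [mul_pow, hε2, Real.sq_sqrt hβ0]; ring
    rw [h1, h2, hα, hβ]; ring
  · have hab : Real.sqrt α * Real.sqrt β = T/(2*K) := by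
      rw [← Real.sqrt_mul hα0]
      have h3 : α * β = (T/(2*K))^2 := by
        have h1 : |c2|^2 = c2^2 := sq_abs c2
        rw [hα, hβ, div_pow]
        field_simp
        linear_combination hK2 - h1 - hT2
      rw [h3, Real.sqrt_sq (by positivity)]
    have h1 : (Real.sqrt α)^2 = α := Real.sq_sqrt hα0
    have hc2abs : c2 * |c2| = ε * c2^2 := by
      rcases le_or_gt 0 c2 with h | h
      · rw [hε, if_pos h, abs_of_nonneg h]; ring
      · rw [hε, if_neg (not_le.mpr h), abs_of_neg h]; ring
    have hval : 2*c2*(Real.sqrt α)^2 + 2*(Real.sqrt α)*((ε * Real.sqrt β)*T) = c2 + ε*K := by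
      have e1 : 2*c2*(Real.sqrt α)^2 + 2*(Real.sqrt α)*((ε * Real.sqrt β)*T)
          = 2*c2*α + 2*ε*T*(Real.sqrt α * Real.sqrt β) := by rw [h1]; ring
      rw [e1, hab, hα]
      have hKne : K ≠ 0 := ne_of_gt hKpos
      field_simp
      linear_combination hc2abs - ε*hK2 + ε*hT2
    rw [hval]
    rcases le_or_gt 0 c2 with h | h
    · have hε1 : ε = 1 := by rw [hε, if_pos h]
      rw [hε1, abs_of_nonneg h, abs_of_nonneg (by linarith : (0:ℝ) ≤ c2 + 1*K)]; ring
    · have hε1 : ε = -1 := by rw [hε, if_neg (not_le.mpr h)]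
      rw [hε1, abs_of_neg h, abs_of_nonpos (by linarith : c2 + (-1)*K ≤ 0)]; ring

/-- the spectral norm of M_F − M_CF equals
|p − 1/2| + sqrt((p−1/2)² + ‖v‖²); in particular it equals ‖v‖ when p = 1/2. -/
theorem stmt6
    (d n : ℕ) (hn : 0 < n)
    (x : Fin n → Fin d → ℝ) (t : Fin n → ℝ) (ht : ∀ i, t i = 0 ∨ t i = 1)
    (zF zCF : Fin n → (Fin d ⊕ Unit) → ℝ)
    (hzF : ∀ i, zF i = Sum.elim (x i) (fun _ => t i))
    (hzCF : ∀ i, zCF i = Sum.elim (x i) (fun _ => 1 - t i))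
    (MF MCF : Matrix (Fin d ⊕ Unit) (Fin d ⊕ Unit) ℝ)
    (hMF : MF = (1 / (n : ℝ)) • ∑ i, vecMulVec (zF i) (zF i))
    (hMCF : MCF = (1 / (n : ℝ)) • ∑ i, vecMulVec (zCF i) (zCF i))
    (p : ℝ) (hp : p = (1 / (n : ℝ)) * ∑ i, t i)
    (v : Fin d → ℝ) (hv : v = (1 / (n : ℝ)) • ∑ i, (2 * t i - 1) • x i)
    -- spectral norm of the symmetric matrix M_F − M_CF
    (s : ℝ)
    (hs : s = sSup {r : ℝ | ∃ u : EuclideanSpace ℝ (Fin d ⊕ Unit), ‖u‖ = 1 ∧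
            r = |∑ i, ∑ j, u i * (MF - MCF) i j * u j|}) :
    s = |p - 1/2| + Real.sqrt ((p - 1/2) ^ 2 + ∑ k, (v k) ^ 2) ∧
    (p = 1/2 → s = Real.sqrt (∑ k, (v k) ^ 2)) := by
  have hn0 : (n : ℝ) ≠ 0 := Nat.cast_ne_zero.mpr hn.ne'
  have e1 : ∀ k l, (MF - MCF) (Sum.inl k) (Sum.inl l) = 0 := by
    intro k l
    simp [hMF, hMCF, Matrix.sub_apply, Matrix.smul_apply, Matrix.sum_apply,
      Matrix.vecMulVec_apply, hzF, hzCF]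
  have e2 : ∀ (k : Fin d) (y : Unit), (MF - MCF) (Sum.inl k) (Sum.inr y) = v k := by
    intro k y
    simp only [hMF, hMCF, Matrix.sub_apply, Matrix.smul_apply, smul_eq_mul,
      Matrix.sum_apply, Matrix.vecMulVec_apply, hzF, hzCF, Sum.elim_inl, Sum.elim_inr]
    rw [hv]
    simp only [Pi.smul_apply, Finset.sum_apply, smul_eq_mul]
    rw [← mul_sub, ← Finset.sum_sub_distrib]
    congr 1
    exact Finset.sum_congr rfl fun i _ => by ring
  have e3 : ∀ (k : Fin d) (y : Unit), (MF - MCF) (Sum.inr y) (Sum.inl k) = v k := by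
    intro k y
    simp only [hMF, hMCF, Matrix.sub_apply, Matrix.smul_apply, smul_eq_mul,
      Matrix.sum_apply, Matrix.vecMulVec_apply, hzF, hzCF, Sum.elim_inl, Sum.elim_inr]
    rw [hv]
    simp only [Pi.smul_apply, Finset.sum_apply, smul_eq_mul]
    rw [← mul_sub, ← Finset.sum_sub_distrib]
    congr 1
    exact Finset.sum_congr rfl fun i _ => by ring
  have e4 : ∀ (y y' : Unit), (MF - MCF) (Sum.inr y) (Sum.inr y') = 2*p - 1 := by
    intro y y'
    simp only [hMF, hMCF, Matrix.sub_apply, Matrix.smul_apply, smul_eq_mul,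
      Matrix.sum_apply, Matrix.vecMulVec_apply, hzF, hzCF, Sum.elim_inr]
    rw [hp, ← mul_sub, ← Finset.sum_sub_distrib]
    have hsum : ∑ i, (t i * t i - (1 - t i) * (1 - t i)) = 2 * (∑ i, t i) - n := by
      rw [Finset.sum_congr rfl (fun i _ => (by ring : t i * t i - (1 - t i) * (1 - t i) = 2 * t i - 1)),
        Finset.sum_sub_distrib, ← Finset.mul_sum]
      simp [Finset.card_univ]
    rw [hsum]
    field_simp
  have hQform : ∀ u : (Fin d ⊕ Unit) → ℝ,
      (∑ i, ∑ j, u i * (MF - MCF) i j * u j)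
        = 2*(p-1/2)*(u (Sum.inr ()))^2 + 2*(u (Sum.inr ())) * ∑ k, v k * u (Sum.inl k) := by
    intro u
    rw [Fintype.sum_sum_type]
    simp only [Fintype.sum_sum_type, e1, e2, e3, e4, mul_zero, zero_mul,
      Finset.sum_const_zero, add_zero, zero_add, Fintype.sum_unique]
    simp only [show (default : Unit) = () from rfl]
    have h1 : ∑ k, u (Sum.inl k) * v k * u (Sum.inr ()) = u (Sum.inr ()) * ∑ k, v k * u (Sum.inl k) := by
      rw [Finset.mul_sum]; exact Finset.sum_congr rfl fun k _ => by ring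
    have h2 : ∑ k, u (Sum.inr ()) * v k * u (Sum.inl k) = u (Sum.inr ()) * ∑ k, v k * u (Sum.inl k) := by
      rw [Finset.mul_sum]; exact Finset.sum_congr rfl fun k _ => by ring
    rw [h1, h2]; ring
  set V2 : ℝ := ∑ k, (v k)^2 with hV2
  have hV0 : 0 ≤ V2 := Finset.sum_nonneg fun k _ => sq_nonneg _
  set L : ℝ := |p - 1/2| + Real.sqrt ((p - 1/2) ^ 2 + V2) with hL
  have hub : ∀ r ∈ {r : ℝ | ∃ u : EuclideanSpace ℝ (Fin d ⊕ Unit), ‖u‖ = 1 ∧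
      r = |∑ i, ∑ j, u i * (MF - MCF) i j * u j|}, r ≤ L := by
    rintro r ⟨u, hu1, rfl⟩
    rw [hQform u]
    have hBa : (∑ k, (u (Sum.inl k))^2) + (u (Sum.inr ()))^2 = 1 := by
      rw [EuclideanSpace.norm_eq, Real.sqrt_eq_one, Fintype.sum_sum_type] at hu1
      simpa [Fintype.sum_unique, Real.norm_eq_abs, sq_abs,
        show (default : Unit) = () from rfl] using hu1
    have hCS : (∑ k, v k * u (Sum.inl k))^2 ≤ V2 * ∑ k, (u (Sum.inl k))^2 :=
      Finset.sum_mul_sq_le_sq_mul_sq univ v (fun k => u (Sum.inl k))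
    exact aux_bound _ _ _ _ _ hBa (Finset.sum_nonneg fun k _ => sq_nonneg _) hV0 hCS
  have hmem : L ∈ {r : ℝ | ∃ u : EuclideanSpace ℝ (Fin d ⊕ Unit), ‖u‖ = 1 ∧
      r = |∑ i, ∑ j, u i * (MF - MCF) i j * u j|} := by
    rcases eq_or_lt_of_le hV0 with hV0' | hVpos
    · have hsum0 : ∑ k, v k ^ 2 = 0 := by rw [← hV2]; exact hV0'.symm
      have hveq : ∀ k ∈ Finset.univ, v k ^ 2 = 0 :=
        (Finset.sum_eq_zero_iff_of_nonneg (fun k _ => sq_nonneg (v k))).mp hsum0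
      have hveq' : ∀ k : Fin d, v k = 0 := fun k => pow_eq_zero_iff (n := 2) (by norm_num) |>.mp (hveq k (Finset.mem_univ k))
      refine ⟨EuclideanSpace.single (Sum.inr ()) (1:ℝ), ?_, ?_⟩
      · simp [EuclideanSpace.norm_single]
      · rw [hQform]
        simp [EuclideanSpace.single_apply, hveq']
        rw [hL, ← hV0', add_zero, Real.sqrt_sq_eq_abs, one_div]
        ring
    · obtain ⟨a, b, hab1, hab2⟩ := aux_attain (p - 1/2) V2 hVpos
      have hT2 : (Real.sqrt V2)^2 = V2 := Real.sq_sqrt hV0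
      have hTpos : 0 < Real.sqrt V2 := Real.sqrt_pos.mpr hVpos
      have hTne : Real.sqrt V2 ≠ 0 := ne_of_gt hTpos
      refine ⟨(WithLp.toLp 2 (fun i => Sum.elim (fun k => (b / Real.sqrt V2) * v k) (fun _ => a) i) :
          EuclideanSpace ℝ (Fin d ⊕ Unit)), ?_, ?_⟩
      · rw [EuclideanSpace.norm_eq, Real.sqrt_eq_one, Fintype.sum_sum_type]
        simp only [PiLp.toLp_apply, WithLp.ofLp_toLp, Sum.elim_inl, Sum.elim_inr, Real.norm_eq_abs, sq_abs, Fintype.sum_unique]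
        have hb : ∑ k, ((b / Real.sqrt V2) * v k)^2 = b^2 := by
          simp_rw [mul_pow, ← Finset.mul_sum]
          rw [← hV2, div_pow, hT2]
          field_simp
        rw [hb]
        linarith [hab1]
      · rw [hQform]
        simp only [PiLp.toLp_apply, WithLp.ofLp_toLp, Sum.elim_inl, Sum.elim_inr]
        have hS : ∑ k, v k * ((b / Real.sqrt V2) * v k) = b * Real.sqrt V2 := by
          have : ∀ k ∈ Finset.univ, v k * ((b / Real.sqrt V2) * v k)
              = (b / Real.sqrt V2) * (v k)^2 := fun k _ => by ring
          rw [Finset.sum_congr rfl this, ← Finset.mul_sum, ← hV2]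
          field_simp
          linear_combination (-b) * hT2
        rw [hS]
        exact hab2.symm
  have hsup : s = L := by rw [hs]; exact IsGreatest.csSup_eq ⟨hmem, hub⟩
  refine ⟨hsup, fun hp2 => ?_⟩
  rw [hsup, hL, hp2]
  norm_num
end

section
/- Under the setup of Theorem 1 (factual and counterfactual samples, linear hypothesis class H_l, squared loss with weak Lipschitz constant μ, expected radius r, ridge parameter λ > 0) and assuming the Cortes–Mohri inequality (λ/(μr))·(L_Q(β̂F) − L_Q(β̂CF))² ≤ disc_{H_l}(P̂F, P̂CF) + min_{h∈H_l} (1/n)Σᵢ(|ŷᵢF(h) − yᵢF| + |ŷᵢCF(h) − yᵢCF|), together with Lipschitz potential outcomes Y₀, Y₁ (constants K₀, K₁) and nearest-neighbor map j(i), conclude: (λ/(μr))·(L_Q(β̂F) − L_Q(β̂CF))² ≤ disc_{H_l}(P̂F, P̂CF) + min_{h∈H_l} (1/n)Σᵢ(|ŷᵢF(h) − yᵢF| + |ŷᵢCF(h) − y_{j(i)}F|) + (K₀/n)Σ_{i:tᵢ=1} d(xᵢ,x_{j(i)}) + (K₁/n)Σ_{i:tᵢ=0} d(xᵢ,x_{j(i)}),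 for both Q = PF and Q = PCF. -/
open Matrix Finset

/-- Theorem 1 — combining the Cortes–Mohri domain-adaptation bound
(taken as a hypothesis) with the nearest-neighbor/Lipschitz correction. -/
theorem stmt17
    {X : Type*} [MetricSpace X] (d n : ℕ) (hn : 0 < n)
    (Phi : X → Fin d → ℝ)
    (Y0 Y1 : X → ℝ) (K0 K1 : ℝ)
    (hY0 : ∀ a b : X, |Y0 a - Y0 b| ≤ K0 * dist a b)
    (hY1 : ∀ a b : X, |Y1 a - Y1 b| ≤ K1 * dist a b)
    (x : Fin n → X) (t : Fin n → Bool)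
    (yF : Fin n → ℝ) (hyF : ∀ i, yF i = if t i then Y1 (x i) else Y0 (x i))
    (yCF : Fin n → ℝ) (hyCF : ∀ i, yCF i = if t i then Y0 (x i) else Y1 (x i))
    (j : Fin n → Fin n)
    (hj : ∀ i, t (j i) = ! t i)
    (hjmin : ∀ i k, t k = ! t i → dist (x i) (x (j i)) ≤ dist (x i) (x k))
    (zF zCF : Fin n → (Fin d ⊕ Unit) → ℝ)
    (hzF : ∀ i, zF i = Sum.elim (Phi (x i)) (fun _ => if t i then (1:ℝ) else 0))
    (hzCF : ∀ i, zCF i = Sum.elim (Phi (x i)) (fun _ => if t i then (0:ℝ) else 1))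
    (lam mu r : ℝ) (hlam : 0 < lam) (hmu : 0 < mu) (hr : 0 < r)
    -- discrepancy term
    (D : ℝ) (hD : 0 ≤ D)
    -- the two regret quantities, for Q = P^F and Q = P^CF
    (SF SCF : ℝ)
    -- the Cortes–Mohri inequality, assumed for both Q
    (hCMF : SF ≤ D + ⨅ h : (Fin d ⊕ Unit) → ℝ,
      (1 / (n : ℝ)) * ∑ i, (|h ⬝ᵥ zF i - yF i| + |h ⬝ᵥ zCF i - yCF i|))
    (hCMCF : SCF ≤ D + ⨅ h : (Fin d ⊕ Unit) → ℝ,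
      (1 / (n : ℝ)) * ∑ i, (|h ⬝ᵥ zF i - yF i| + |h ⬝ᵥ zCF i - yCF i|)) :
    SF ≤ D + (⨅ h : (Fin d ⊕ Unit) → ℝ,
        (1 / (n : ℝ)) * ∑ i, (|h ⬝ᵥ zF i - yF i| + |h ⬝ᵥ zCF i - yF (j i)|))
      + (K0 / n) * ∑ i ∈ univ.filter (fun i => t i = true), dist (x i) (x (j i))
      + (K1 / n) * ∑ i ∈ univ.filter (fun i => t i = false), dist (x i) (x (j i)) ∧
    SCF ≤ D + (⨅ h : (Fin d ⊕ Unit) → ℝ,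
        (1 / (n : ℝ)) * ∑ i, (|h ⬝ᵥ zF i - yF i| + |h ⬝ᵥ zCF i - yF (j i)|))
      + (K0 / n) * ∑ i ∈ univ.filter (fun i => t i = true), dist (x i) (x (j i))
      + (K1 / n) * ∑ i ∈ univ.filter (fun i => t i = false), dist (x i) (x (j i)) := by
  have hn' : (0:ℝ) < n := Nat.cast_pos.mpr hn
  set f : ((Fin d ⊕ Unit) → ℝ) → ℝ := fun h =>
    (1 / (n : ℝ)) * ∑ i, (|h ⬝ᵥ zF i - yF i| + |h ⬝ᵥ zCF i - yCF i|) with hf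
  set g : ((Fin d ⊕ Unit) → ℝ) → ℝ := fun h =>
    (1 / (n : ℝ)) * ∑ i, (|h ⬝ᵥ zF i - yF i| + |h ⬝ᵥ zCF i - yF (j i)|) with hg
  set S0 : ℝ := ∑ i ∈ univ.filter (fun i => t i = true), dist (x i) (x (j i)) with hS0
  set S1 : ℝ := ∑ i ∈ univ.filter (fun i => t i = false), dist (x i) (x (j i)) with hS1
  have bddf : BddBelow (Set.range f) := by
    refine ⟨0, ?_⟩
    rintro _ ⟨h, rfl⟩
    simp only [hf]
    positivity
  have corr : ∀ i : Fin n, |yF (j i) - yCF i| ≤ (if t i then K0 else K1) * dist (x i) (x (j i)) := by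
    intro i
    have hji := hj i
    cases hti : t i with
    | false =>
      rw [hti] at hji
      simp only [hyF, hyCF, hji, hti, Bool.not_false, if_true, if_false]
      calc |Y1 (x (j i)) - Y1 (x i)| ≤ K1 * dist (x (j i)) (x i) := hY1 _ _
        _ = K1 * dist (x i) (x (j i)) := by rw [dist_comm]
    | true =>
      rw [hti] at hji
      simp only [hyF, hyCF, hji, hti, Bool.not_true, if_true, if_false]
      calc |Y0 (x (j i)) - Y0 (x i)| ≤ K0 * dist (x (j i)) (x i) := hY0 _ _
        _ = K0 * dist (x i) (x (j i)) := by rw [dist_comm]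
  have hSsplit : ∑ i, (if t i then K0 else K1) * dist (x i) (x (j i))
      = K0 * S0 + K1 * S1 := by
    rw [hS0, hS1, Finset.mul_sum, Finset.mul_sum,
      ← Finset.sum_filter_add_sum_filter_not univ (fun i => t i = true)
        (fun i => (if t i then K0 else K1) * dist (x i) (x (j i)))]
    congr 1
    · exact Finset.sum_congr rfl (fun i hi => by simp only [Finset.mem_filter] at hi; simp [hi.2])
    · refine Finset.sum_congr ?_ (fun i hi => ?_)
      · apply Finset.filter_congr
        intro i _
        simp [Bool.not_eq_true]
      · simp only [Finset.mem_filter, Bool.not_eq_true] at hi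
        simp [hi.2]
  have step : ∀ h, f h ≤ g h + ((K0 / n) * S0 + (K1 / n) * S1) := by
    intro h
    have h1 : ∑ i, (|h ⬝ᵥ zF i - yF i| + |h ⬝ᵥ zCF i - yCF i|)
        ≤ ∑ i, ((|h ⬝ᵥ zF i - yF i| + |h ⬝ᵥ zCF i - yF (j i)|)
            + (if t i then K0 else K1) * dist (x i) (x (j i))) := by
      apply Finset.sum_le_sum
      intro i _
      have htri := abs_sub_le (h ⬝ᵥ zCF i) (yF (j i)) (yCF i)
      have hc := corr i
      linarith
    have h1' : ∑ i, (|h ⬝ᵥ zF i - yF i| + |h ⬝ᵥ zCF i - yCF i|)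
        ≤ (∑ i, (|h ⬝ᵥ zF i - yF i| + |h ⬝ᵥ zCF i - yF (j i)|)) + (K0 * S0 + K1 * S1) := by
      rw [← hSsplit, ← Finset.sum_add_distrib]
      exact h1
    have h2 : (1 / (n : ℝ)) * ∑ i, (|h ⬝ᵥ zF i - yF i| + |h ⬝ᵥ zCF i - yCF i|)
        ≤ (1 / (n : ℝ)) * ((∑ i, (|h ⬝ᵥ zF i - yF i| + |h ⬝ᵥ zCF i - yF (j i)|))
            + (K0 * S0 + K1 * S1)) :=
      mul_le_mul_of_nonneg_left h1' (by positivity)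
    calc f h ≤ (1 / (n : ℝ)) * ((∑ i, (|h ⬝ᵥ zF i - yF i| + |h ⬝ᵥ zCF i - yF (j i)|))
            + (K0 * S0 + K1 * S1)) := h2
      _ = g h + ((K0 / n) * S0 + (K1 / n) * S1) := by
          simp only [hg]
          field_simp
  have final : (⨅ h, f h) ≤ (⨅ h, g h) + (K0 / n) * S0 + (K1 / n) * S1 := by
    have h3 : ∀ h, (⨅ h', f h') - ((K0 / n) * S0 + (K1 / n) * S1) ≤ g h := by
      intro h
      have := (ciInf_le bddf h).trans (step h)
      linarith
    have h4 := le_ciInf h3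
    linarith
  exact ⟨by linarith [hCMF, final], by linarith [hCMCF, final]⟩
end

section
/- Fix vectors z₁,…,zₙ ∈ ℝ^k with ‖zᵢ‖₂ ≤ m and any targets y₁,…,yₙ, y'₁,…,y'ₙ ∈ ℝ. Let β̂ and β̂' be the ridge regression solutions (with the same λ > 0) for targets (yᵢ) and (y'ᵢ) respectively. Then ‖β̂ − β̂'‖₂ ≤ (1/λ)·‖(1/n)Σᵢ zᵢ(yᵢ − y'ᵢ)‖₂ ≤ (m/λ)·(1/n)Σᵢ|yᵢ − y'ᵢ|. -/
open scoped RealInnerProductSpace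
open Finset

lemma aux_lin_zero (L Q : ℝ) (h : ∀ t : ℝ, 0 ≤ t * L + t ^ 2 * Q) : L = 0 := by
  set c : ℝ := (|Q| + 1)⁻¹ with hcdef
  have hpos : (0:ℝ) < |Q| + 1 := by positivity
  have hc : c * (|Q| + 1) = 1 := inv_mul_cancel₀ (ne_of_gt hpos)
  have hcpos : 0 < c := inv_pos.mpr hpos
  have h2 := h (-(L * c))
  have hQ : Q ≤ |Q| := le_abs_self Q
  have hcq : c * Q ≤ 1 - c := by nlinarith [mul_le_mul_of_nonneg_left hQ hcpos.le]
  have h3 : L ^ 2 * c * (c * Q) ≤ L ^ 2 * c * (1 - c) :=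
    mul_le_mul_of_nonneg_left hcq (by positivity)
  have hL2 : L ^ 2 ≤ 0 := by nlinarith [h2, h3, mul_pos hcpos hcpos, sq_nonneg L]
  have : L ^ 2 = 0 := le_antisymm hL2 (sq_nonneg L)
  exact pow_eq_zero_iff (by norm_num) |>.mp this

lemma foc (k n : ℕ) (z : Fin n → EuclideanSpace ℝ (Fin k)) (y : Fin n → ℝ) (lam : ℝ)
    (β : EuclideanSpace ℝ (Fin k))
    (h : ∀ γ, (1 / (n : ℝ)) * ∑ i, (⟪β, z i⟫ - y i) ^ 2 + lam * ‖β‖ ^ 2 ≤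
      (1 / (n : ℝ)) * ∑ i, (⟪γ, z i⟫ - y i) ^ 2 + lam * ‖γ‖ ^ 2)
    (v : EuclideanSpace ℝ (Fin k)) :
    (1 / (n : ℝ)) * ∑ i, ⟪v, z i⟫ * (⟪β, z i⟫ - y i) + lam * ⟪β, v⟫ = 0 := by
  have key : (2 : ℝ) * ((1 / (n : ℝ)) * ∑ i, ⟪v, z i⟫ * (⟪β, z i⟫ - y i) + lam * ⟪β, v⟫) = 0 := by
    apply aux_lin_zero _ ((1 / (n : ℝ)) * ∑ i, ⟪v, z i⟫ ^ 2 + lam * ‖v‖ ^ 2)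
    intro t
    have hk := h (β + t • v)
    have hnorm : ‖β + t • v‖ ^ 2 = ‖β‖ ^ 2 + 2 * (t * ⟪β, v⟫) + t ^ 2 * ‖v‖ ^ 2 := by
      rw [@norm_add_sq_real, real_inner_smul_right, norm_smul]
      simp [mul_pow, sq_abs]
    have hinner : ∀ i, ⟪β + t • v, z i⟫ = ⟪β, z i⟫ + t * ⟪v, z i⟫ := by
      intro i
      rw [inner_add_left, real_inner_smul_left]
    have hexp : ∀ i, (⟪β + t • v, z i⟫ - y i) ^ 2 =
        (⟪β, z i⟫ - y i) ^ 2 + t * (2 * (⟪v, z i⟫ * (⟪β, z i⟫ - y i))) + t ^ 2 * ⟪v, z i⟫ ^ 2 := by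
      intro i; rw [hinner i]; ring
    rw [hnorm] at hk
    simp_rw [hexp, Finset.sum_add_distrib, ← Finset.mul_sum] at hk
    nlinarith [hk]
  linarith

/-- stability of ridge regression with respect to the targets. -/
theorem stmt19
    (k n : ℕ) (hn : 0 < n)
    (m : ℝ) (hm : 0 ≤ m)
    (z : Fin n → EuclideanSpace ℝ (Fin k)) (hz : ∀ i, ‖z i‖ ≤ m)
    (y y' : Fin n → ℝ)
    (lam : ℝ) (hlam : 0 < lam)
    (βhat βhat' : EuclideanSpace ℝ (Fin k))
    (hβhat : ∀ β, (1 / (n : ℝ)) * ∑ i, (⟪βhat, z i⟫ - y i) ^ 2 + lam * ‖βhat‖ ^ 2 ≤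
      (1 / (n : ℝ)) * ∑ i, (⟪β, z i⟫ - y i) ^ 2 + lam * ‖β‖ ^ 2)
    (hβhat' : ∀ β, (1 / (n : ℝ)) * ∑ i, (⟪βhat', z i⟫ - y' i) ^ 2 + lam * ‖βhat'‖ ^ 2 ≤
      (1 / (n : ℝ)) * ∑ i, (⟪β, z i⟫ - y' i) ^ 2 + lam * ‖β‖ ^ 2) :
    ‖βhat - βhat'‖ ≤ (1 / lam) * ‖(1 / (n : ℝ)) • ∑ i, (y i - y' i) • z i‖ ∧
    (1 / lam) * ‖(1 / (n : ℝ)) • ∑ i, (y i - y' i) • z i‖ ≤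
      (m / lam) * ((1 / (n : ℝ)) * ∑ i, |y i - y' i|) := by
  set w := βhat - βhat' with hw
  set b := (1 / (n : ℝ)) • ∑ i, (y i - y' i) • z i with hb
  have hninv : (0:ℝ) ≤ 1 / (n : ℝ) := by positivity
  have F := foc k n z y lam βhat hβhat w
  have F' := foc k n z y' lam βhat' hβhat' w
  -- inner product identity: ⟪b, w⟫ = (1/n) ∑ (y i - y' i) * ⟪w, z i⟫
  have hbw : ⟪b, w⟫ = (1 / (n : ℝ)) * ∑ i, (y i - y' i) * ⟪w, z i⟫ := by
    rw [hb, real_inner_smul_left, sum_inner]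
    congr 1
    refine Finset.sum_congr rfl fun i _ => ?_
    rw [real_inner_smul_left, real_inner_comm]
  -- key equation: lam * ‖w‖^2 + (1/n) ∑ ⟪w, z i⟫^2 = ⟪b, w⟫
  have hwzsq : ∀ i : Fin n, ⟪w, z i⟫ * (⟪βhat, z i⟫ - y i) - ⟪w, z i⟫ * (⟪βhat', z i⟫ - y' i)
      = ⟪w, z i⟫ ^ 2 - (y i - y' i) * ⟪w, z i⟫ := by
    intro i
    have h : ⟪w, z i⟫ = ⟪βhat, z i⟫ - ⟪βhat', z i⟫ := by rw [hw, inner_sub_left]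
    rw [h]; ring
  have hwinner : ⟪βhat, w⟫ - ⟪βhat', w⟫ = ‖w‖ ^ 2 := by
    rw [hw, ← inner_sub_left, real_inner_self_eq_norm_sq]
  have hkey : lam * ‖w‖ ^ 2 + (1 / (n : ℝ)) * ∑ i, ⟪w, z i⟫ ^ 2 = ⟪b, w⟫ := by
    have hsub : (1 / (n : ℝ)) * ∑ i, ⟪w, z i⟫ * (⟪βhat, z i⟫ - y i)
        - (1 / (n : ℝ)) * ∑ i, ⟪w, z i⟫ * (⟪βhat', z i⟫ - y' i)
        = (1 / (n : ℝ)) * ∑ i, ⟪w, z i⟫ ^ 2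
        - (1 / (n : ℝ)) * ∑ i, (y i - y' i) * ⟪w, z i⟫ := by
      rw [← mul_sub, ← mul_sub, ← Finset.sum_sub_distrib, ← Finset.sum_sub_distrib]
      congr 1
      exact Finset.sum_congr rfl fun i _ => hwzsq i
    rw [hbw]
    nlinarith [F, F', hsub, hwinner]
  have hsq : (0:ℝ) ≤ (1 / (n : ℝ)) * ∑ i, ⟪w, z i⟫ ^ 2 := by positivity
  have hle : lam * ‖w‖ ^ 2 ≤ ‖b‖ * ‖w‖ := by
    have := real_inner_le_norm b w
    nlinarith
  constructor
  · rcases eq_or_lt_of_le (norm_nonneg w) with h0 | h0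
    · rw [← h0]; positivity
    · rw [div_mul_eq_mul_div, le_div_iff₀ hlam]
      nlinarith
  · have hS : ‖∑ i, (y i - y' i) • z i‖ ≤ m * ∑ i, |y i - y' i| := by
      calc ‖∑ i, (y i - y' i) • z i‖ ≤ ∑ i, ‖(y i - y' i) • z i‖ := norm_sum_le _ _
        _ = ∑ i, |y i - y' i| * ‖z i‖ := by
            refine Finset.sum_congr rfl fun i _ => ?_
            rw [norm_smul, Real.norm_eq_abs]
        _ ≤ ∑ i, |y i - y' i| * m := by
            refine Finset.sum_le_sum fun i _ => ?_
            exact mul_le_mul_of_nonneg_left (hz i) (abs_nonneg _)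
        _ = m * ∑ i, |y i - y' i| := by rw [← Finset.sum_mul]; ring
    have hbnorm : ‖b‖ = (1 / (n : ℝ)) * ‖∑ i, (y i - y' i) • z i‖ := by
      rw [hb, norm_smul, Real.norm_eq_abs, abs_of_nonneg hninv]
    rw [hbnorm]
    have hlaminv : (0:ℝ) ≤ 1 / lam := by positivity
    calc (1 / lam) * ((1 / (n : ℝ)) * ‖∑ i, (y i - y' i) • z i‖)
        ≤ (1 / lam) * ((1 / (n : ℝ)) * (m * ∑ i, |y i - y' i|)) := by
          apply mul_le_mul_of_nonneg_left _ hlaminv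
          exact mul_le_mul_of_nonneg_left hS hninv
      _ = (m / lam) * ((1 / (n : ℝ)) * ∑ i, |y i - y' i|) := by ring
end
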